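/- arXiv:math/0703727 — 4 statements merged into one kernel-verified Lean document; each statement's English description precedes it below -/
import Mathlib

section
/- Let M be a module over a commutative ring R with an alternating bilinear form ⟨,⟩. Then the operation x ▷ y = x + ⟨x,y⟩y is right self-distributive: (x ▷ y) ▷ z = (x ▷ z) ▷ (y ▷ z) for all x, y, z ∈ M. -/
/-!
`x ▷ y` is the image of `x` under the transvection `τ_y = id + ⟨·, y⟩ y`. For an alternating
form each `τ_z` is linear and preserves the form, so
`τ_{τ_z y} (τ_z x) = τ_z x + ⟨x, y⟩ τ_z y = τ_z (τ_y x)`.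
-/

namespace LinearMap.IsAlt

variable {R M : Type*} [CommRing R] [AddCommMonoid M] [Module R M] {B : M →ₗ[R] M →ₗ[R] R}

theorem apply_transvection_flip (hB : B.IsAlt) (x y z : M) :
    B (transvection (B.flip z) z x) (transvection (B.flip z) z y) = B x y := by
  have hzy : B z y = -B y z := (hB.neg y z).symm
  simp only [transvection.apply, flip_apply, map_add, map_smul, add_apply, smul_apply,
    smul_eq_mul, hB.self_eq_zero, hzy]
  ring

theorem transvection_flip_self_distrib (hB : B.IsAlt) (x y z : M) :
    transvection (B.flip z) z (transvection (B.flip y) y x) =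
      transvection (B.flip (transvection (B.flip z) z y)) (transvection (B.flip z) z y)
        (transvection (B.flip z) z x) := by
  conv_rhs => rw [transvection.apply, flip_apply, hB.apply_transvection_flip]
  rw [← map_smul, ← map_add, ← flip_apply (f := B), ← transvection.apply]

end LinearMap.IsAlt

theorem symplectic_quandle_self_distrib_general {R M : Type*} [CommRing R] [AddCommGroup M] [Module R M]
    (B : M →ₗ[R] M →ₗ[R] R)
    (halt : ∀ x : M, B x x = 0)
    (op : M → M → M) (hop : ∀ x y, op x y = x + (B x y) • y) :
    ∀ x y z : M, op (op x y) z = op (op x z) (op y z) := by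
  have hop_eq : op = fun x y ↦ LinearMap.transvection (B.flip y) y x := by
    funext x y
    exact hop x y
  subst hop_eq
  exact LinearMap.IsAlt.transvection_flip_self_distrib halt

theorem symplectic_quandle_self_distrib {R M : Type*} [CommRing R] [AddCommGroup M] [Module R M]
    (B : M →ₗ[R] M →ₗ[R] R)
    (hanti : ∀ x y : M, B x y = - B y x)
    (halt : ∀ x : M, B x x = 0)
    (op : M → M → M) (hop : ∀ x y, op x y = x + (B x y) • y) :
    ∀ x y z : M, op (op x y) z = op (op x z) (op y z) :=
  symplectic_quandle_self_distrib_general B halt op hop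
end

section
/- Let M be a module over a commutative ring R with an alternating bilinear form, with quandle operation x ▷ y = x + ⟨x,y⟩y and dual operation x ▷⁻¹ y = x - ⟨x,y⟩y. Then the two operations distribute over each other: (x ▷ y) ▷⁻¹ z = (x ▷⁻¹ z) ▷ (y ▷⁻¹ z) for all x, y, z ∈ M. -/
/-!
Since `⟨,⟩` is alternating, `w ↦ w ▷⁻¹ z = w - ⟨w,z⟩z` is a symplectic transvection and so
preserves the form: `⟨x ▷⁻¹ z, y ▷⁻¹ z⟩ = ⟨x,y⟩`. With this, both sides of the identity expand to
`x + ⟨x,y⟩y - ⟨x,z⟩z - ⟨x,y⟩⟨y,z⟩z`.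
-/

namespace LinearMap.IsAlt

variable {R M : Type*} [CommRing R] [AddCommGroup M] [Module R M] {B : M →ₗ[R] M →ₗ[R] R}

theorem apply_transvection_apply_transvection (hB : B.IsAlt) (c : R) (z x y : M) :
    B (transvection (c • B.flip z) z x) (transvection (c • B.flip z) z y) = B x y := by
  simp only [transvection.apply, map_add, map_smul, add_apply, smul_apply, flip_apply,
    smul_eq_mul, hB.self_eq_zero, ← hB.neg y z]
  ring

end LinearMap.IsAlt

theorem symplectic_quandle_mutual_distrib_general {R M : Type*} [CommRing R] [AddCommGroup M]
    [Module R M]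
    (B : M →ₗ[R] M →ₗ[R] R)
    (halt : ∀ x : M, B x x = 0)
    (op opInv : M → M → M)
    (hop : ∀ x y, op x y = x + (B x y) • y)
    (hopInv : ∀ x y, opInv x y = x - (B x y) • y) :
    ∀ x y z : M, opInv (op x y) z = op (opInv x z) (opInv y z) := by
  intro x y z
  have hopInv_eq_transvection (w : M) :
      opInv w z = LinearMap.transvection ((-1 : R) • B.flip z) z w := by
    rw [hopInv, LinearMap.transvection.apply, LinearMap.smul_apply, LinearMap.flip_apply,
      neg_one_smul, neg_smul, sub_eq_add_neg]
  have hform : B (opInv x z) (opInv y z) = B x y := by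
    rw [hopInv_eq_transvection, hopInv_eq_transvection]
    exact LinearMap.IsAlt.apply_transvection_apply_transvection halt _ z x y
  rw [hop (opInv x z), hform, hopInv, hop, hopInv, hopInv]
  simp only [map_add, map_smul, LinearMap.add_apply, LinearMap.smul_apply, smul_eq_mul]
  module

theorem symplectic_quandle_mutual_distrib {R M : Type*} [CommRing R] [AddCommGroup M]
    [Module R M]
    (B : M →ₗ[R] M →ₗ[R] R)
    (hanti : ∀ x y : M, B x y = - B y x)
    (halt : ∀ x : M, B x x = 0)
    (op opInv : M → M → M)
    (hop : ∀ x y, op x y = x + (B x y) • y)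
    (hopInv : ∀ x y, opInv x y = x - (B x y) • y) :
    ∀ x y z : M, opInv (op x y) z = op (opInv x z) (opInv y z) :=
  symplectic_quandle_mutual_distrib_general B halt op opInv hop hopInv
end

section
/- Let F be a field of characteristic not 2, V = F² with the standard symplectic form and quandle operation x ▷ y = x + ⟨x,y⟩y. Suppose x ∈ V with x₂ ≠ 0. Then for any target value z ∈ F, there is a finite sequence of quandle operations ▷ and ▷⁻¹ taking x to an element whose first coordinate equals z and whose second coordinate is still x₂. (Key identity: writing x₁ = z + w, one has w/(c) + w² = (1/(2c) + w·sign)² - (1/(2c))² for appropriate c = ±x₂, allowing completion of the square.) -/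
/-!
Acting by `(s, 0)` with `▷` and then by `(t, 0)` with `▷⁻¹` fixes the second coordinate and
shifts the first by `x₂ (t² - s²)`. Outside characteristic 2 every `a` is a difference of
squares, `a = ((a + 1) / 2)² - ((a - 1) / 2)²`, so the shift can be made `z - x₁`.
-/

/-- One step of a quandle operation or dual quandle operation. -/
def quandleStep {V : Type*} (op opInv : V → V → V) (a b : V) : Prop :=
  ∃ y : V, b = op a y ∨ b = opInv a y

theorem exists_eq_sq_sub_sq {F : Type*} [Field F] (h2 : (2 : F) ≠ 0) (a : F) :
    ∃ s t : F, a = s ^ 2 - t ^ 2 :=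
  ⟨(a + 1) / 2, (a - 1) / 2, by field_simp; ring⟩

section Shear

variable {F : Type*} [CommRing F] {B : (F × F) → (F × F) → F}
  (hB : ∀ x y : F × F, B x y = x.1 * y.2 - x.2 * y.1)
include hB

theorem op_horizontal {op : (F × F) → (F × F) → (F × F)}
    (hop : ∀ x y, op x y = x + (B x y) • y) (x : F × F) (s : F) :
    op x (s, 0) = (x.1 - x.2 * s ^ 2, x.2) := by
  ext <;> simp [hop, hB]; ring

theorem opInv_horizontal {opInv : (F × F) → (F × F) → (F × F)}
    (hopInv : ∀ x y, opInv x y = x - (B x y) • y) (x : F × F) (t : F) :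
    opInv x (t, 0) = (x.1 + x.2 * t ^ 2, x.2) := by
  ext <;> simp [hopInv, hB]; ring

end Shear

theorem symplectic_quandle_change_coord {F : Type*} [Field F]
    (hchar : (2 : F) ≠ 0)
    (B : (F × F) → (F × F) → F)
    (hB : ∀ x y : F × F, B x y = x.1 * y.2 - x.2 * y.1)
    (op opInv : (F × F) → (F × F) → (F × F))
    (hop : ∀ x y, op x y = x + (B x y) • y)
    (hopInv : ∀ x y, opInv x y = x - (B x y) • y) :
    ∀ x : F × F, x.2 ≠ 0 → ∀ z : F,
      ∃ w : F × F, Relation.ReflTransGen (quandleStep op opInv) x w ∧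
        w.1 = z ∧ w.2 = x.2 := by
  intro x hx z
  obtain ⟨s, t, hst⟩ := exists_eq_sq_sub_sq hchar ((x.1 - z) / x.2)
  have hshift : x.1 - z = (s ^ 2 - t ^ 2) * x.2 := (div_eq_iff hx).mp hst
  refine ⟨opInv (op x (s, 0)) (t, 0),
    .tail (.single ⟨_, .inl rfl⟩) ⟨_, .inr rfl⟩, ?_, ?_⟩ <;>
    simp only [opInv_horizontal hB hopInv, op_horizontal hB hop]
  linear_combination hshift
end

section
/- Let F be a finite field or a field of characteristic not 2, and let V = F² with the standard nondegenerate symplectic form. Then the subquandle V \ {0} with operation x ▷ y = x + ⟨x,y⟩y is connected: any nonzero vector can be taken to any other nonzero vector by a finite sequence of operations ▷ and ▷⁻¹. -/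
/-!
Every nonzero `y` is reachable from `x` as soon as `⟨x, y⟩ ≠ 0`: acting by `t • w` moves `x` by
`t² ⟨x, w⟩ • w` along the line `x + F w` without changing `⟨·, w⟩`, and every scalar is a difference
of two squares (a square, in a finite field of characteristic 2), so from `x` one reaches every
point `x + c • (y - x)`. If `⟨x, y⟩ = 0`, pass through `x + w` for any `w` with `⟨x, w⟩ ≠ 0`.
-/

open Relation

theorem exists_eq_sq_sub_sq_s14 {K : Type*} [Field K] (hK : Finite K ∨ (2 : K) ≠ 0) (c : K) :
    ∃ a b : K, c = a ^ 2 - b ^ 2 := by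
  by_cases h2 : (2 : K) = 0
  · have : Finite K := hK.resolve_right (not_not_intro h2)
    have : CharP K 2 := CharTwo.of_one_ne_zero_of_two_eq_zero one_ne_zero h2
    obtain ⟨a, rfl⟩ := isSquare_of_charTwo' c
    exact ⟨a, 0, by ring⟩
  · exact ⟨(c + 1) / 2, (c - 1) / 2, by field_simp; ring⟩

namespace SymplecticQuandle

variable {F : Type*} [Field F]

def form (x y : F × F) : F := x.1 * y.2 - x.2 * y.1

def op (x y : F × F) : F × F := x + form x y • y

def opInv (x y : F × F) : F × F := x - form x y • y

@[simp]
lemma form_add_left (x y z : F × F) : form (x + y) z = form x z + form y z := by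
  simp only [form, Prod.fst_add, Prod.snd_add]; ring

@[simp]
lemma form_add_right (x y z : F × F) : form x (y + z) = form x y + form x z := by
  simp only [form, Prod.fst_add, Prod.snd_add]; ring

@[simp]
lemma form_smul_left (t : F) (x y : F × F) : form (t • x) y = t * form x y := by
  simp only [form, Prod.smul_fst, Prod.smul_snd, smul_eq_mul]; ring

@[simp]
lemma form_smul_right (t : F) (x y : F × F) : form x (t • y) = t * form x y := by
  simp only [form, Prod.smul_fst, Prod.smul_snd, smul_eq_mul]; ring

@[simp]
lemma form_sub_right (x y z : F × F) : form x (y - z) = form x y - form x z := by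
  simp only [form, Prod.fst_sub, Prod.snd_sub]; ring

@[simp]
lemma form_self (x : F × F) : form x x = 0 := by
  simp only [form]; ring

lemma form_swap (x y : F × F) : form y x = -form x y := by
  simp only [form]; ring

lemma form_smul_add_form_smul_add_form_smul (x y z : F × F) :
    form x y • z + form y z • x + form z x • y = 0 := by
  ext <;> simp only [form, Prod.fst_add, Prod.snd_add, Prod.smul_fst, Prod.smul_snd, smul_eq_mul,
    Prod.fst_zero, Prod.snd_zero] <;> ring

lemma exists_form_ne_zero {x : F × F} (hx : x ≠ 0) : ∃ w, form x w ≠ 0 := by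
  by_contra! h
  have h1 : x.1 = 0 := by simpa [form] using h (0, 1)
  have h2 : x.2 = 0 := by simpa [form] using h (1, 0)
  exact hx (Prod.ext h1 h2)

lemma form_ne_zero_of_form_eq_zero {x y w : F × F} (hxy : form x y = 0) (hxw : form x w ≠ 0)
    (hy : y ≠ 0) : form w y ≠ 0 := by
  intro hwy
  have h := form_smul_add_form_smul_add_form_smul x w y
  rw [hwy, form_swap x y, hxy] at h
  simp only [neg_zero, zero_smul, add_zero, smul_eq_zero] at h
  exact h.elim hxw hy

lemma quandleStep_add_sq_smul (x w : F × F) (t : F) :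
    quandleStep op opInv x (x + (t ^ 2 * form x w) • w) :=
  ⟨t • w, Or.inl (by rw [op, form_smul_right, smul_smul]; ring_nf)⟩

lemma quandleStep_sub_sq_smul (x w : F × F) (t : F) :
    quandleStep op opInv x (x - (t ^ 2 * form x w) • w) :=
  ⟨t • w, Or.inr (by rw [opInv, form_smul_right, smul_smul]; ring_nf)⟩

lemma reflTransGen_add_smul (hF : Finite F ∨ (2 : F) ≠ 0) {x w : F × F} (hxw : form x w ≠ 0)
    (c : F) : ReflTransGen (quandleStep op opInv) x (x + c • w) := by
  obtain ⟨a, b, hab⟩ := exists_eq_sq_sub_sq_s14 hF (c / form x w)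
  set z := x + (a ^ 2 * form x w) • w
  have hc : c = a ^ 2 * form x w - b ^ 2 * form z w := by
    simp only [z, form_add_left, form_smul_left, form_self, mul_zero, add_zero]
    rw [← sub_mul, ← hab, div_mul_cancel₀ c hxw]
  have hend : x + c • w = z - (b ^ 2 * form z w) • w := by
    rw [hc, sub_smul, add_sub_assoc]
  rw [hend]
  exact .tail (.single (quandleStep_add_sq_smul x w a)) (quandleStep_sub_sq_smul z w b)

lemma reflTransGen_of_form_ne_zero (hF : Finite F ∨ (2 : F) ≠ 0) {x y : F × F}
    (hxy : form x y ≠ 0) : ReflTransGen (quandleStep op opInv) x y := by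
  have hdir : form x (y - x) ≠ 0 := by rwa [form_sub_right, form_self, sub_zero]
  have h := reflTransGen_add_smul hF hdir 1
  rwa [one_smul, add_sub_cancel] at h

theorem reflTransGen_of_ne_zero (hF : Finite F ∨ (2 : F) ≠ 0) {x y : F × F} (hx : x ≠ 0)
    (hy : y ≠ 0) : ReflTransGen (quandleStep op opInv) x y := by
  by_cases hxy : form x y = 0
  · obtain ⟨w, hxw⟩ := exists_form_ne_zero hx
    have hwy := form_ne_zero_of_form_eq_zero hxy hxw hy
    refine (reflTransGen_of_form_ne_zero hF (y := x + w) ?_).trans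
      (reflTransGen_of_form_ne_zero hF ?_)
    · simpa using hxw
    · simpa [hxy] using hwy
  · exact reflTransGen_of_form_ne_zero hF hxy

end SymplecticQuandle

theorem symplectic_quandle_connected {F : Type*} [Field F]
    (hF : Finite F ∨ (2 : F) ≠ 0)
    (B : (F × F) → (F × F) → F)
    (hB : ∀ x y : F × F, B x y = x.1 * y.2 - x.2 * y.1)
    (op opInv : (F × F) → (F × F) → (F × F))
    (hop : ∀ x y, op x y = x + (B x y) • y)
    (hopInv : ∀ x y, opInv x y = x - (B x y) • y) :
    ∀ x y : F × F, x ≠ 0 → y ≠ 0 →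
      Relation.ReflTransGen (quandleStep op opInv) x y := by
  obtain rfl : B = SymplecticQuandle.form := funext₂ hB
  obtain rfl : op = SymplecticQuandle.op := funext₂ hop
  obtain rfl : opInv = SymplecticQuandle.opInv := funext₂ hopInv
  exact fun x y hx hy => SymplecticQuandle.reflTransGen_of_ne_zero hF hx hy
end
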